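/- arXiv:2302.03117 — 2 statements merged into one kernel-verified Lean document; each statement's English description precedes it below -/
import Mathlib

section
/- In the two-batch Gaussian bandit: Z₁ = (Z_{1,0}, Z_{1,1}) with independent coordinates Z_{1,k} ~ N(h_k, 2σ_k²), and conditional on Z₁, Z₂ = (Z_{2,0}, Z_{2,1}) with independent coordinates Z_{2,0} ~ N(h₀, σ₀²/Λ₂(Z₁)) and Z_{2,1} ~ N(h₁, σ₁²/(1-Λ₂(Z₁))), where Λ₂(Z₁) ∈ (0,1) is measurable in Z₁. Define W₁ = Z_{1,1} - Z_{1,0} and W₂ = Z_{2,1} - Z_{2,0}. Under the null h₀ = h₁, the statistic ZJM = (W₁/√(2(σ₀²+σ₁²)) + W₂/√(σ₀²/Λ₂(Z₁) + σ₁²/(1-Λ₂(Z₁)))) / √2 has exactly the standard normal distribution N(0,1), provided Λ₂(Z₁) depends on Z₁ only through W₁. -/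
open MeasureTheory ProbabilityTheory
open Real
open scoped NNReal ENNReal

lemma gaussianPDFReal_conv (a b : ℝ) (ha : 0 < a) (hb : 0 < b) (z : ℝ) :
    ∫ x, gaussianPDFReal 0 a.toNNReal x * gaussianPDFReal 0 b.toNNReal (z - x)
      = gaussianPDFReal 0 (a + b).toNNReal z := by
  have hab : 0 < a + b := by positivity
  set c : ℝ := (a + b) / (2 * a * b) with hcdef
  have hc : 0 < c := by positivity
  set m : ℝ := a * z / (a + b) with hmdef
  have hca : ((a.toNNReal : ℝ)) = a := Real.coe_toNNReal a ha.le
  have hcb : ((b.toNNReal : ℝ)) = b := Real.coe_toNNReal b hb.le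
  have hcab : (((a + b).toNNReal : ℝ)) = a + b := Real.coe_toNNReal _ hab.le
  have hπ : (0:ℝ) < π := pi_pos
  have key : ∀ x, gaussianPDFReal 0 a.toNNReal x * gaussianPDFReal 0 b.toNNReal (z - x)
      = (gaussianPDFReal 0 (a + b).toNNReal z * Real.sqrt (c / π)) * Real.exp (-c * (x - m)^2) := by
    intro x
    simp only [gaussianPDFReal, hca, hcb, hcab, sub_zero]
    rw [mul_mul_mul_comm, ← Real.exp_add]
    have hconst : (√(2 * π * a))⁻¹ * (√(2 * π * b))⁻¹
        = (√(2 * π * (a + b)))⁻¹ * Real.sqrt (c / π) := by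
      rw [← Real.sqrt_inv, ← Real.sqrt_inv, ← Real.sqrt_inv, ← Real.sqrt_mul (by positivity),
        ← Real.sqrt_mul (by positivity)]
      congr 1
      rw [hcdef]
      field_simp
    have hexp : -x ^ 2 / (2 * a) + -(z - x) ^ 2 / (2 * b)
        = -z ^ 2 / (2 * (a + b)) + -c * (x - m) ^ 2 := by
      rw [hcdef, hmdef]
      field_simp
      ring
    rw [hconst, hexp, Real.exp_add]
    ring
  rw [funext key, integral_const_mul,
    integral_sub_right_eq_self (fun x => Real.exp (-c * x ^ 2)) m, integral_gaussian]
  have : Real.sqrt (c / π) * Real.sqrt (π / c) = 1 := by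
    rw [← Real.sqrt_mul (by positivity)]
    rw [div_mul_div_comm]
    rw [mul_comm π c, div_self (by positivity)]
    exact Real.sqrt_one
  rw [mul_assoc, this, mul_one]

lemma gaussianReal_conv (a b : ℝ) (ha : 0 < a) (hb : 0 < b) :
    Measure.map (fun p : ℝ × ℝ => p.1 + p.2)
      ((gaussianReal 0 a.toNNReal).prod (gaussianReal 0 b.toNNReal))
      = gaussianReal 0 (a + b).toNNReal := by
  have hab : 0 < a + b := by positivity
  have hva : a.toNNReal ≠ 0 := by simp [Real.toNNReal_eq_zero, not_le, ha]
  have hvb : b.toNNReal ≠ 0 := by simp [Real.toNNReal_eq_zero, not_le, hb]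
  have hvab : (a + b).toNNReal ≠ 0 := by simp [Real.toNNReal_eq_zero, not_le, hab]
  have hadd : Measurable (fun p : ℝ × ℝ => p.1 + p.2) := measurable_fst.add measurable_snd
  have hjm : Measurable fun q : ℝ × ℝ => gaussianPDF q.1 b.toNNReal q.2 := by
    unfold gaussianPDF gaussianPDFReal
    fun_prop
  ext s hs
  rw [Measure.map_apply hadd hs, Measure.prod_apply (hadd hs)]
  have h1 : ∀ x : ℝ, (gaussianReal 0 b.toNNReal)
        (Prod.mk x ⁻¹' ((fun p : ℝ × ℝ => p.1 + p.2) ⁻¹' s))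
      = ∫⁻ z in s, gaussianPDF x b.toNNReal z := by
    intro x
    have hpre : Prod.mk x ⁻¹' ((fun p : ℝ × ℝ => p.1 + p.2) ⁻¹' s)
        = (fun y => x + y) ⁻¹' s := rfl
    rw [hpre, ← Measure.map_apply (measurable_const_add x) hs, gaussianReal_map_const_add,
      zero_add, gaussianReal_apply _ hvb]
  simp_rw [h1]
  have hmeas : Measurable fun x => ∫⁻ z in s, gaussianPDF x b.toNNReal z :=
    Measurable.lintegral_prod_right (f := fun x z => gaussianPDF x b.toNNReal z) hjm
  rw [gaussianReal_of_var_ne_zero _ hva,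
    lintegral_withDensity_eq_lintegral_mul _ (measurable_gaussianPDF _ _) hmeas]
  have h2 : ∀ x, (gaussianPDF 0 a.toNNReal * fun x => ∫⁻ z in s, gaussianPDF x b.toNNReal z) x
      = ∫⁻ z in s, gaussianPDF 0 a.toNNReal x * gaussianPDF x b.toNNReal z := by
    intro x
    exact (lintegral_const_mul' _ _ ENNReal.ofReal_ne_top).symm
  simp_rw [h2]
  rw [lintegral_lintegral_swap
    (((measurable_gaussianPDF 0 a.toNNReal).comp measurable_fst).mul hjm).aemeasurable]
  have h3 : ∀ z, ∫⁻ x, gaussianPDF 0 a.toNNReal x * gaussianPDF x b.toNNReal z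
      = gaussianPDF 0 (a + b).toNNReal z := by
    intro z
    have hrw : ∀ x, gaussianPDF 0 a.toNNReal x * gaussianPDF x b.toNNReal z
        = ENNReal.ofReal (gaussianPDFReal 0 a.toNNReal x * gaussianPDFReal 0 b.toNNReal (z - x)) := by
      intro x
      rw [gaussianPDF, gaussianPDF, ← ENNReal.ofReal_mul (gaussianPDFReal_nonneg _ _ _)]
      congr 2
      rw [gaussianPDFReal_sub, zero_add]
    simp_rw [hrw]
    have hint : Integrable (fun x => gaussianPDFReal 0 a.toNNReal x
        * gaussianPDFReal 0 b.toNNReal (z - x)) := by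
      have hbd : Integrable (fun x => gaussianPDFReal 0 b.toNNReal (z - x)
          * gaussianPDFReal 0 a.toNNReal x) := by
        refine Integrable.bdd_mul (integrable_gaussianPDFReal 0 a.toNNReal)
          (((measurable_gaussianPDFReal _ _).comp
            (measurable_const.sub measurable_id)).aestronglyMeasurable)
          (c := (Real.sqrt (2 * π * b))⁻¹) (ae_of_all _ fun x => ?_)
        rw [Real.norm_eq_abs, abs_of_nonneg (gaussianPDFReal_nonneg _ _ _)]
        unfold gaussianPDFReal
        rw [Real.coe_toNNReal b hb.le]
        calc (√(2 * π * b))⁻¹ * Real.exp (-(z - x - 0) ^ 2 / (2 * b))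
            ≤ (√(2 * π * b))⁻¹ * 1 := by
              gcongr
              refine Real.exp_le_one_iff.mpr ?_
              apply div_nonpos_of_nonpos_of_nonneg
              · simp [sq_nonneg]
              · positivity
          _ = (√(2 * π * b))⁻¹ := mul_one _
      exact hbd.congr (ae_of_all _ fun x => mul_comm _ _)
    rw [← ofReal_integral_eq_lintegral_ofReal hint
      (ae_of_all _ fun x => mul_nonneg (gaussianPDFReal_nonneg _ _ _) (gaussianPDFReal_nonneg _ _ _)),
      gaussianPDFReal_conv a b ha hb z]
    rfl
  simp_rw [h3]
  rw [← gaussianReal_apply _ hvab]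

lemma gaussianReal_map_div_sqrt (v : ℝ≥0) (hv : v ≠ 0) :
    Measure.map (fun x => x / Real.sqrt (v : ℝ)) (gaussianReal 0 v) = gaussianReal 0 1 := by
  have h : (fun x : ℝ => x / Real.sqrt (v : ℝ)) = (fun x => x * (Real.sqrt (v : ℝ))⁻¹) := by
    funext x; rw [div_eq_mul_inv]
  rw [h, gaussianReal_map_mul_const, mul_zero]
  congr 1
  ext
  push_cast
  rw [inv_pow, Real.sq_sqrt v.coe_nonneg, inv_mul_cancel₀]
  exact_mod_cast hv

lemma gaussianReal_diff (m : ℝ) (a b : ℝ) (ha : 0 < a) (hb : 0 < b) :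
    Measure.map (fun p : ℝ × ℝ => p.2 - p.1)
      ((gaussianReal m a.toNNReal).prod (gaussianReal m b.toNNReal))
      = gaussianReal 0 (a + b).toNNReal := by
  have h1 : Measure.map (fun x : ℝ => m - x) (gaussianReal m a.toNNReal)
      = gaussianReal 0 a.toNNReal := by
    have hc : (fun x : ℝ => m - x) = (fun y : ℝ => y + m) ∘ (fun x : ℝ => (-1) * x) := by
      funext x; simp; ring
    rw [hc, ← Measure.map_map (measurable_id'.add_const m) (measurable_const_mul _),
      gaussianReal_map_const_mul, gaussianReal_map_add_const]
    have hm0 : (-1 : ℝ) * m + m = 0 := by ring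
    rw [hm0]
    congr 1
    ext; push_cast; norm_num
  have h2 : Measure.map (fun x : ℝ => x - m) (gaussianReal m b.toNNReal)
      = gaussianReal 0 b.toNNReal := by
    have hc : (fun x : ℝ => x - m) = (fun y : ℝ => y + (-m)) := by
      funext x; rw [sub_eq_add_neg]
    rw [hc, gaussianReal_map_add_const, add_neg_cancel]
  have hcomp : (fun p : ℝ × ℝ => p.2 - p.1)
      = (fun p : ℝ × ℝ => p.1 + p.2) ∘ (Prod.map (fun x : ℝ => m - x) (fun y : ℝ => y - m)) := by
    funext p; simp [Prod.map]
  have hm1 : Measurable (fun x : ℝ => m - x) := measurable_const.sub measurable_id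
  have hm2 : Measurable (fun x : ℝ => x - m) := measurable_id.sub measurable_const
  rw [hcomp, ← Measure.map_map (g := fun p : ℝ × ℝ => p.1 + p.2) (measurable_fst.add measurable_snd) (hm1.prodMap hm2),
    ← Measure.map_prod_map _ _ hm1 hm2, h1, h2, gaussianReal_conv a b ha hb]

lemma gaussianReal_perz (a b m u : ℝ) (ha : 0 < a) (hb : 0 < b) :
    Measure.map (fun y : ℝ × ℝ => (u + (y.2 - y.1) / Real.sqrt (a + b)) / Real.sqrt 2)
      ((gaussianReal m a.toNNReal).prod (gaussianReal m b.toNNReal))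
      = gaussianReal (u / Real.sqrt 2) (2 : ℝ≥0)⁻¹ := by
  have hab : 0 < a + b := by positivity
  have hvab : (a + b).toNNReal ≠ 0 := by simp [Real.toNNReal_eq_zero, not_le, hab]
  have hcoe : (((a + b).toNNReal : ℝ)) = a + b := Real.coe_toNNReal _ hab.le
  have hcomp : (fun y : ℝ × ℝ => (u + (y.2 - y.1) / Real.sqrt (a + b)) / Real.sqrt 2)
      = (fun x : ℝ => x * (Real.sqrt 2)⁻¹) ∘ ((fun x : ℝ => u + x)
        ∘ ((fun x : ℝ => x / Real.sqrt (((a + b).toNNReal : ℝ))) ∘ (fun y : ℝ × ℝ => y.2 - y.1))) := by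
    funext y
    simp only [Function.comp_apply, hcoe]
    rw [div_eq_mul_inv]
  have hmul : Measurable (fun x : ℝ => x * (Real.sqrt 2)⁻¹) := measurable_id.mul_const _
  have haddu : Measurable (fun x : ℝ => u + x) := measurable_const_add u
  have hdiv : Measurable (fun x : ℝ => x / Real.sqrt (((a + b).toNNReal : ℝ))) :=
    measurable_id.div_const _
  have hdf : Measurable (fun y : ℝ × ℝ => y.2 - y.1) := measurable_snd.sub measurable_fst
  rw [hcomp, ← Measure.map_map hmul (haddu.comp (hdiv.comp hdf)),
    ← Measure.map_map haddu (hdiv.comp hdf),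
    ← Measure.map_map hdiv hdf,
    gaussianReal_diff m a b ha hb, gaussianReal_map_div_sqrt _ hvab,
    gaussianReal_map_const_add, zero_add, gaussianReal_map_mul_const]
  have hm0 : (Real.sqrt 2)⁻¹ * u = u / Real.sqrt 2 := by
    rw [div_eq_mul_inv, mul_comm]
  rw [hm0]
  congr 1
  ext
  push_cast
  rw [inv_pow, Real.sq_sqrt (by norm_num : (0:ℝ) ≤ 2)]
  norm_num

lemma gaussian_mix {α : Type*} [MeasurableSpace α] (ρ : Measure α) [SFinite ρ]
    (g : α → ℝ) (hg : Measurable g) (v : ℝ≥0) {s : Set ℝ} (hs : MeasurableSet s) :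
    ∫⁻ z, gaussianReal (g z) v s ∂ρ
      = Measure.map (fun p : ℝ × ℝ => p.1 + p.2) ((ρ.map g).prod (gaussianReal 0 v)) s := by
  have hadd : Measurable (fun p : ℝ × ℝ => p.1 + p.2) := measurable_fst.add measurable_snd
  rw [Measure.map_apply hadd hs, Measure.prod_apply (hadd hs),
    lintegral_map (measurable_measure_prodMk_left (hadd hs)) hg]
  apply lintegral_congr
  intro z
  have hpre : Prod.mk (g z) ⁻¹' ((fun p : ℝ × ℝ => p.1 + p.2) ⁻¹' s)
      = (fun y => g z + y) ⁻¹' s := rfl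
  rw [hpre, ← Measure.map_apply (measurable_const_add _) hs, gaussianReal_map_const_add, zero_add]

lemma gaussianReal_map_div_sqrt_two :
    Measure.map (fun x : ℝ => x / Real.sqrt 2) (gaussianReal 0 1) = gaussianReal 0 (2 : ℝ≥0)⁻¹ := by
  have h : (fun x : ℝ => x / Real.sqrt 2) = fun x => x * (Real.sqrt 2)⁻¹ := by
    funext x; rw [div_eq_mul_inv]
  rw [h, gaussianReal_map_mul_const, mul_zero]
  congr 1
  ext
  push_cast
  rw [inv_pow, Real.sq_sqrt (by norm_num : (0:ℝ) ≤ 2)]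
  norm_num

lemma gaussianReal_conv_half :
    Measure.map (fun p : ℝ × ℝ => p.1 + p.2)
      ((gaussianReal 0 (2 : ℝ≥0)⁻¹).prod (gaussianReal 0 (2 : ℝ≥0)⁻¹)) = gaussianReal 0 1 := by
  have h := gaussianReal_conv (1/2) (1/2) (by norm_num) (by norm_num)
  have h2 : ((1:ℝ)/2).toNNReal = (2 : ℝ≥0)⁻¹ := by
    ext
    rw [Real.coe_toNNReal _ (by norm_num)]
    push_cast
    norm_num
  have h3 : ((1:ℝ)/2 + 1/2).toNNReal = 1 := by
    rw [show (1:ℝ)/2 + 1/2 = (1:ℝ) by norm_num, Real.toNNReal_one]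
  rwa [h2, h3] at h



/-- in the two-batch Gaussian bandit with allocation rule
`Λ₂ ∈ (0,1)` depending on the first batch only through `W₁ = Z₁₁ − Z₁₀`, under
the null `h₀ = h₁` the statistic
`ZJM = (W₁/√(2(σ₀²+σ₁²)) + W₂/√(σ₀²/Λ₂ + σ₁²/(1−Λ₂)))/√2`
has exactly the standard normal distribution. -/
theorem zjm_statistic_standard_normal
    {Ω : Type*} [MeasurableSpace Ω] [StandardBorelSpace Ω] [Nonempty Ω]
    (P : Measure Ω) [IsProbabilityMeasure P]
    (σ₀ σ₁ : ℝ) (hσ₀ : 0 < σ₀) (hσ₁ : 0 < σ₁)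
    (h₀ h₁ : ℝ) (hnull : h₀ = h₁)
    (Z10 Z11 Z20 Z21 : Ω → ℝ)
    (hZ10 : Measurable Z10) (hZ11 : Measurable Z11)
    (hZ20 : Measurable Z20) (hZ21 : Measurable Z21)
    (Λ : ℝ → ℝ) (hΛmeas : Measurable Λ)
    (hΛrange : ∀ w, Λ w ∈ Set.Ioo (0 : ℝ) 1)
    (hbatch1 : Measure.map (fun ω => (Z10 ω, Z11 ω)) P
      = (gaussianReal h₀ (Real.toNNReal (2 * σ₀ ^ 2))).prod
          (gaussianReal h₁ (Real.toNNReal (2 * σ₁ ^ 2))))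
    (hbatch2 : condDistrib (fun ω => (Z20 ω, Z21 ω))
        (fun ω => (Z10 ω, Z11 ω)) P
      =ᵐ[Measure.map (fun ω => (Z10 ω, Z11 ω)) P]
        fun z =>
          (gaussianReal h₀ (Real.toNNReal (σ₀ ^ 2 / Λ (z.2 - z.1)))).prod
            (gaussianReal h₁
              (Real.toNNReal (σ₁ ^ 2 / (1 - Λ (z.2 - z.1)))))) :
    Measure.map (fun ω =>
      ((Z11 ω - Z10 ω) / Real.sqrt (2 * (σ₀ ^ 2 + σ₁ ^ 2))
        + (Z21 ω - Z20 ω) /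
            Real.sqrt (σ₀ ^ 2 / Λ (Z11 ω - Z10 ω)
              + σ₁ ^ 2 / (1 - Λ (Z11 ω - Z10 ω)))) / Real.sqrt 2) P
      = gaussianReal 0 1 := by
  subst hnull
  set S : ℝ := 2 * (σ₀ ^ 2 + σ₁ ^ 2) with hSdef
  have hS : 0 < S := by positivity
  set X : Ω → ℝ × ℝ := fun ω => (Z10 ω, Z11 ω) with hXdef
  set Y : Ω → ℝ × ℝ := fun ω => (Z20 ω, Z21 ω) with hYdef
  have hXm : Measurable X := hZ10.prodMk hZ11
  have hYm : Measurable Y := hZ20.prodMk hZ21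
  set u : ℝ × ℝ → ℝ := fun z => (z.2 - z.1) / Real.sqrt S with hudef
  have hum : Measurable u := (measurable_snd.sub measurable_fst).div_const _
  set V : ℝ × ℝ → ℝ := fun z => σ₀ ^ 2 / Λ (z.2 - z.1) + σ₁ ^ 2 / (1 - Λ (z.2 - z.1)) with hVdef
  have hVm : Measurable V :=
    (measurable_const.div (hΛmeas.comp (measurable_snd.sub measurable_fst))).add
      (measurable_const.div (measurable_const.sub (hΛmeas.comp (measurable_snd.sub measurable_fst))))
  set F : (ℝ × ℝ) × (ℝ × ℝ) → ℝ :=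
    fun q => (u q.1 + (q.2.2 - q.2.1) / Real.sqrt (V q.1)) / Real.sqrt 2 with hFdef
  have hFm : Measurable F := by
    refine ((hum.comp measurable_fst).add ?_).div_const _
    exact (measurable_snd.snd.sub measurable_snd.fst).div
      ((Real.continuous_sqrt.measurable).comp (hVm.comp measurable_fst))
  haveI : IsProbabilityMeasure (Measure.map X P) := Measure.isProbabilityMeasure_map hXm.aemeasurable
  haveI : IsProbabilityMeasure (Measure.map (fun ω => (X ω, Y ω)) P) :=
    Measure.isProbabilityMeasure_map (hXm.prodMk hYm).aemeasurable
  have hstat : (fun ω =>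
      ((Z11 ω - Z10 ω) / Real.sqrt S
        + (Z21 ω - Z20 ω) /
            Real.sqrt (σ₀ ^ 2 / Λ (Z11 ω - Z10 ω)
              + σ₁ ^ 2 / (1 - Λ (Z11 ω - Z10 ω)))) / Real.sqrt 2)
      = F ∘ (fun ω => (X ω, Y ω)) := rfl
  have hdis : (Measure.map X P) ⊗ₘ condDistrib Y X P = Measure.map (fun ω => (X ω, Y ω)) P := by
    rw [condDistrib_def, ← Measure.fst_map_prodMk₀ hYm.aemeasurable]
    exact Measure.disintegrate ..
  -- law of the studentized first-batch difference
  have hdiff : Measure.map (fun z : ℝ × ℝ => z.2 - z.1) (Measure.map X P)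
      = gaussianReal 0 (2 * σ₀ ^ 2 + 2 * σ₁ ^ 2).toNNReal := by
    rw [hbatch1]
    exact gaussianReal_diff _ _ _ (by positivity) (by positivity)
  have hvS : (2 * σ₀ ^ 2 + 2 * σ₁ ^ 2).toNNReal ≠ 0 := by
    simp [Real.toNNReal_eq_zero, not_le]; positivity
  have hcoeS : (((2 * σ₀ ^ 2 + 2 * σ₁ ^ 2).toNNReal : ℝ)) = S := by
    rw [Real.coe_toNNReal _ (by positivity), hSdef]; ring
  have hstd : Measure.map u (Measure.map X P) = gaussianReal 0 1 := by
    have hcomp : u = (fun x : ℝ => x / Real.sqrt (((2 * σ₀ ^ 2 + 2 * σ₁ ^ 2).toNNReal : ℝ)))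
        ∘ (fun z : ℝ × ℝ => z.2 - z.1) := by
      funext z
      simp only [Function.comp_apply, hcoeS, hudef]
    have hdm : Measurable (fun x : ℝ => x / Real.sqrt (((2 * σ₀ ^ 2 + 2 * σ₁ ^ 2).toNNReal : ℝ))) :=
      measurable_id.div_const _
    rw [hcomp, ← Measure.map_map (f := fun z : ℝ × ℝ => z.2 - z.1) hdm (measurable_snd.sub measurable_fst),
      hdiff, gaussianReal_map_div_sqrt _ hvS]
  have hg : Measure.map (fun z => u z / Real.sqrt 2) (Measure.map X P)
      = gaussianReal 0 (2 : ℝ≥0)⁻¹ := by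
    have hcomp : (fun z => u z / Real.sqrt 2) = (fun x : ℝ => x / Real.sqrt 2) ∘ u := rfl
    have hdm2 : Measurable (fun x : ℝ => x / Real.sqrt 2) := measurable_id.div_const _
    rw [hcomp, ← Measure.map_map hdm2 hum, hstd,
      gaussianReal_map_div_sqrt_two]
  ext s hs
  rw [hstat, ← Measure.map_map hFm (hXm.prodMk hYm), ← hdis, Measure.map_apply hFm hs,
    Measure.compProd_apply (hFm hs)]
  have hae : (fun z => condDistrib Y X P z (Prod.mk z ⁻¹' (F ⁻¹' s)))
      =ᵐ[Measure.map X P] (fun z => gaussianReal (u z / Real.sqrt 2) (2 : ℝ≥0)⁻¹ s) := by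
    filter_upwards [hbatch2] with z hz
    rw [hz]
    have hL := hΛrange (z.2 - z.1)
    have ha : 0 < σ₀ ^ 2 / Λ (z.2 - z.1) := div_pos (by positivity) hL.1
    have hb : 0 < σ₁ ^ 2 / (1 - Λ (z.2 - z.1)) := div_pos (by positivity) (by linarith [hL.2])
    have hfz : Measurable (fun y : ℝ × ℝ =>
        (u z + (y.2 - y.1) / Real.sqrt (σ₀ ^ 2 / Λ (z.2 - z.1) + σ₁ ^ 2 / (1 - Λ (z.2 - z.1))))
          / Real.sqrt 2) :=
      ((measurable_const.add ((measurable_snd.sub measurable_fst).div_const _)).div_const _)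
    have hpre : Prod.mk z ⁻¹' (F ⁻¹' s) = (fun y : ℝ × ℝ =>
        (u z + (y.2 - y.1) / Real.sqrt (σ₀ ^ 2 / Λ (z.2 - z.1) + σ₁ ^ 2 / (1 - Λ (z.2 - z.1))))
          / Real.sqrt 2) ⁻¹' s := rfl
    rw [hpre, ← Measure.map_apply hfz hs,
      gaussianReal_perz _ _ _ (u z) ha hb]
  rw [lintegral_congr_ae hae,
    show (∫⁻ z, gaussianReal (u z / Real.sqrt 2) (2 : ℝ≥0)⁻¹ s ∂(Measure.map X P)) = _ from
      gaussian_mix _ _ (hum.div_const _) _ hs,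
    hg, gaussianReal_conv_half]
end

section
/- Let Z_b,k, Z⁻_b,k be conditionally independent given the past, with conditional laws Z_{b,k} ~ N((λ_{b,k+1}-λ_{b,k}) J h, (λ_{b,k+1}-λ_{b,k}) J) and Z⁻_{b,k} ~ N((λ̄_b - λ_{b,k+1} + λ_{b,k}) J h, (λ̄_b - λ_{b,k+1} + λ_{b,k}) J), where the allocation (λ_{b,0},...,λ_{b,K}) is a measurable function of the conditioning variables and J ≥ 0. Then Z̄_{b,k} := Z_{b,k} + Z⁻_{b,k} satisfies Z̄_{b,k} ~ N(λ̄_b J h, λ̄_b J) conditionally on the past, and for any bounded measurable g of the past and Z_b, E_h[g | past] = E_0[g · ∏_{k=0}^{K-1} exp(h·Z̄_{b,k} − (λ̄_b/2) J h²) | past]. -/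
open MeasureTheory ProbabilityTheory Real
open scoped NNReal ENNReal

set_option maxHeartbeats 1000000

lemma exp_factor (m1 m2 z x a b : ℝ) (ha : 0 < a) (hb : 0 < b) :
    (-(x - m1)^2 / (2*a)) + (-(z - x - m2)^2 / (2*b))
    = (-(z - (m1+m2))^2 / (2*(a+b))) + (-(x - (m1 + a*(z-m1-m2)/(a+b)))^2 / (2*(a*b/(a+b)))) := by
  have hab : a + b ≠ 0 := by positivity
  field_simp
  ring

lemma const_factor (a b : ℝ) (ha : 0 < a) (hb : 0 < b) :
    (√(2*π*a))⁻¹ * (√(2*π*b))⁻¹ = (√(2*π*(a+b)))⁻¹ * (√(2*π*(a*b/(a+b))))⁻¹ := by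
  have hab : (0:ℝ) < a + b := by positivity
  rw [← mul_inv, ← mul_inv, ← Real.sqrt_mul (by positivity), ← Real.sqrt_mul (by positivity)]
  congr 1
  field_simp

lemma pdf_factor (m1 m2 z x : ℝ) (v1 v2 : ℝ≥0) (h1 : v1 ≠ 0) (h2 : v2 ≠ 0) :
    gaussianPDFReal m1 v1 x * gaussianPDFReal m2 v2 (z - x)
    = gaussianPDFReal (m1 + m2) (v1 + v2) z
      * gaussianPDFReal (m1 + v1 * (z - m1 - m2) / (v1 + v2)) (v1 * v2 / (v1 + v2)) x := by
  have ha : (0:ℝ) < v1 := lt_of_le_of_ne v1.coe_nonneg (by exact_mod_cast (Ne.symm h1))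
  have hb : (0:ℝ) < v2 := lt_of_le_of_ne v2.coe_nonneg (by exact_mod_cast (Ne.symm h2))
  have hab : (v1:ℝ) + v2 ≠ 0 := by positivity
  simp only [gaussianPDFReal_def, NNReal.coe_add, NNReal.coe_div, NNReal.coe_mul]
  rw [mul_mul_mul_comm, mul_mul_mul_comm ((√(2*π*((v1:ℝ)+(v2:ℝ))))⁻¹)]
  rw [const_factor _ _ ha hb, ← Real.exp_add, ← Real.exp_add,
    exp_factor m1 m2 z x _ _ ha hb]

lemma gauss_tilt (v h : ℝ) (hv : 0 ≤ v) :
    gaussianReal (v * h) (Real.toNNReal v)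
    = (gaussianReal 0 (Real.toNNReal v)).withDensity
        (fun x => ENNReal.ofReal (Real.exp (h * x - v * h ^ 2 / 2))) := by
  rcases hv.eq_or_lt with hv0 | hv0
  · rw [← hv0]
    simp only [zero_mul, Real.toNNReal_zero, gaussianReal_zero_var, zero_div]
    refine (Measure.ext fun s hs => ?_).symm
    classical
    rw [withDensity_apply _ hs,
      setLIntegral_dirac' (f := fun a => ENNReal.ofReal (rexp (h * a - 0))) (by fun_prop) hs]
    simp [Measure.dirac_apply' _ hs, Set.indicator_apply]
  · have hvn : Real.toNNReal v ≠ 0 := by simp [Real.toNNReal_eq_zero, not_le, hv0]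
    have hcoe : ((Real.toNNReal v : ℝ≥0) : ℝ) = v := Real.coe_toNNReal _ hv
    rw [gaussianReal_of_var_ne_zero _ hvn, gaussianReal_of_var_ne_zero _ hvn,
      ← withDensity_mul _ (measurable_gaussianPDF _ _) (by fun_prop)]
    congr 1
    funext x
    simp only [Pi.mul_apply, gaussianPDF, ← ENNReal.ofReal_mul (gaussianPDFReal_nonneg _ _ _)]
    congr 1
    simp only [gaussianPDFReal_def, hcoe, mul_assoc]
    congr 1
    rw [← Real.exp_add]
    congr 1
    field_simp
    ring

lemma gauss_conv (m1 m2 : ℝ) (v1 v2 : ℝ≥0) :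
    Measure.map (fun q : ℝ × ℝ => q.1 + q.2)
      ((gaussianReal m1 v1).prod (gaussianReal m2 v2)) = gaussianReal (m1 + m2) (v1 + v2) := by
  by_cases h1 : v1 = 0
  · subst h1
    rw [gaussianReal_zero_var, Measure.dirac_prod, Measure.map_map (by fun_prop) (by fun_prop)]
    have : ((fun q : ℝ × ℝ => q.1 + q.2) ∘ Prod.mk m1) = (m1 + ·) := rfl
    rw [this, gaussianReal_map_const_add, add_comm m2 m1, zero_add]
  by_cases h2 : v2 = 0
  · subst h2
    rw [gaussianReal_zero_var, Measure.prod_dirac, Measure.map_map (by fun_prop) (by fun_prop)]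
    have : ((fun q : ℝ × ℝ => q.1 + q.2) ∘ (fun x => (x, m2))) = (· + m2) := rfl
    rw [this, gaussianReal_map_add_const, add_zero]
  -- nondegenerate case
  have h12 : v1 + v2 ≠ 0 := fun h => h1 (by simpa using (add_eq_zero.mp h).1)
  ext s hs
  rw [Measure.map_apply (by fun_prop) hs,
    Measure.prod_apply ((by fun_prop : Measurable fun q : ℝ × ℝ => q.1 + q.2) hs)]
  have step1 : ∀ x : ℝ, gaussianReal m2 v2 (Prod.mk x ⁻¹' ((fun q : ℝ × ℝ => q.1 + q.2) ⁻¹' s))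
      = ∫⁻ z in s, gaussianPDF (x + m2) v2 z := by
    intro x
    have hpre : Prod.mk x ⁻¹' ((fun q : ℝ × ℝ => q.1 + q.2) ⁻¹' s) = (x + ·) ⁻¹' s := rfl
    rw [hpre, ← Measure.map_apply (by fun_prop) hs, gaussianReal_map_const_add,
      gaussianReal_apply _ h2 s, add_comm m2 x]
  simp_rw [step1]
  rw [gaussianReal_of_var_ne_zero _ h1,
    lintegral_withDensity_eq_lintegral_mul _ (measurable_gaussianPDF _ _) ?hmeas]
  case hmeas =>
    apply Measurable.lintegral_prod_right (f := fun x z => gaussianPDF (x + m2) v2 z)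
    simp only [gaussianPDF_def, gaussianPDFReal_def]
    fun_prop
  have step2 : ∀ x : ℝ, (gaussianPDF m1 v1 * fun x => ∫⁻ z in s, gaussianPDF (x + m2) v2 z) x
      = ∫⁻ z in s, ENNReal.ofReal (gaussianPDFReal m1 v1 x * gaussianPDFReal m2 v2 (z - x)) := by
    intro x
    simp only [Pi.mul_apply, gaussianPDF_def]
    rw [← lintegral_const_mul _ (by simp only [gaussianPDFReal_def]; fun_prop)]
    simp_rw [← ENNReal.ofReal_mul (gaussianPDFReal_nonneg _ _ _), add_comm x m2,
      ← gaussianPDFReal_sub]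
  simp_rw [step2]
  rw [lintegral_lintegral_swap (by simp only [gaussianPDFReal_def]; fun_prop)]
  have step3 : ∀ z : ℝ, ∫⁻ x, ENNReal.ofReal (gaussianPDFReal m1 v1 x * gaussianPDFReal m2 v2 (z - x))
      = gaussianPDF (m1 + m2) (v1 + v2) z := by
    intro z
    simp_rw [pdf_factor m1 m2 z _ v1 v2 h1 h2,
      ENNReal.ofReal_mul (gaussianPDFReal_nonneg _ _ _)]
    rw [lintegral_const_mul _ (by simp only [gaussianPDFReal_def]; fun_prop)]
    have : ∫⁻ x, ENNReal.ofReal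
        (gaussianPDFReal (m1 + v1 * (z - m1 - m2) / (v1 + v2)) (v1 * v2 / (v1 + v2)) x) = 1 := by
      have hne : v1 * v2 / (v1 + v2) ≠ 0 := div_ne_zero (mul_ne_zero h1 h2) h12
      simpa [gaussianPDF_def] using lintegral_gaussianPDF_eq_one (m1 + v1 * (z - m1 - m2) / (v1 + v2)) hne
    rw [this, mul_one, gaussianPDF_def]
  simp_rw [step3]
  rw [← gaussianReal_apply _ h12 s]

lemma lintegral_pi_prod : ∀ {n : ℕ} (μ : Fin n → Measure ℝ),
    (∀ i, IsProbabilityMeasure (μ i)) → ∀ (f : Fin n → ℝ → ℝ≥0∞), (∀ i, Measurable (f i)) →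
    ∫⁻ x : Fin n → ℝ, ∏ i, f i (x i) ∂Measure.pi μ = ∏ i, ∫⁻ y, f i y ∂μ i := by
  intro n
  induction n with
  | zero =>
    intro μ hμ f hf
    simp [lintegral_const, Measure.pi_univ]
  | succ n ih =>
    intro μ hμ f hf
    have hmp := measurePreserving_piFinSuccAbove μ 0
    have key := hmp.lintegral_map_equiv
      (fun p : ℝ × (Fin n → ℝ) =>
        ∏ i, f i (((MeasurableEquiv.piFinSuccAbove (fun _ => ℝ) 0).symm p) i))
    simp only [MeasurableEquiv.symm_apply_apply] at key
    rw [← key]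
    have hcoord : ∀ (p : ℝ × (Fin n → ℝ)) (i : Fin (n+1)),
        ((MeasurableEquiv.piFinSuccAbove (fun _ => ℝ) 0).symm p) i = (Fin.cons p.1 p.2 : Fin (n+1) → ℝ) i := by
      intro p i
      refine Fin.cases ?_ ?_ i
      · simp [MeasurableEquiv.piFinSuccAbove, Fin.insertNthEquiv]
      · intro j
        simp [MeasurableEquiv.piFinSuccAbove, Fin.insertNthEquiv, Fin.succAbove]
    simp_rw [hcoord]
    have hprod : ∀ p : ℝ × (Fin n → ℝ), ∏ i, f i ((Fin.cons p.1 p.2 : Fin (n+1) → ℝ) i)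
        = f 0 p.1 * ∏ j : Fin n, f j.succ (p.2 j) := by
      intro p
      rw [Fin.prod_univ_succ]
      simp
    simp_rw [hprod]
    rw [lintegral_prod_mul (f := fun x => f 0 x) (g := fun y : Fin n → ℝ => ∏ j, f j.succ (y j))
      ((hf 0).aemeasurable)
      ((Finset.measurable_prod _ fun j _ => (hf j.succ).comp (measurable_pi_apply j)).aemeasurable)]
    rw [ih _ (fun j => hμ _) _ (fun j => hf j.succ)]
    rw [Fin.prod_univ_succ]
    rfl

lemma pi_withDensity {n : ℕ} (μ : Fin n → Measure ℝ) [∀ i, IsProbabilityMeasure (μ i)]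
    (f : Fin n → ℝ → ℝ≥0∞) (hf : ∀ i, Measurable (f i))
    [∀ i, SigmaFinite ((μ i).withDensity (f i))] :
    Measure.pi (fun i => (μ i).withDensity (f i))
      = (Measure.pi μ).withDensity (fun x => ∏ i, f i (x i)) := by
  classical
  refine Measure.pi_eq fun s hs => ?_
  rw [withDensity_apply _ (MeasurableSet.univ_pi hs)]
  have key : ∫⁻ x in Set.univ.pi s, ∏ i, f i (x i) ∂Measure.pi μ
      = ∫⁻ x : Fin n → ℝ, ∏ i, (fun y => f i y * (s i).indicator 1 y) (x i) ∂Measure.pi μ := by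
    rw [← lintegral_indicator (MeasurableSet.univ_pi hs) _]
    congr 1
    funext x
    rw [Set.indicator_apply]
    by_cases hx : x ∈ Set.univ.pi s
    · rw [if_pos hx]
      refine (Finset.prod_congr rfl fun i _ => ?_).symm
      simp only []
      rw [Set.indicator_of_mem (hx i (Set.mem_univ i)) 1, Pi.one_apply, mul_one]
    · rw [if_neg hx]
      have : ∃ i, x i ∉ s i := by
        by_contra hcon
        push_neg at hcon
        exact hx fun i _ => hcon i
      obtain ⟨i, hi⟩ := this
      refine (Finset.prod_eq_zero (Finset.mem_univ i) ?_).symm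
      simp only []
      simp [Set.indicator_of_notMem hi]
  rw [key, lintegral_pi_prod μ inferInstance (fun i y => f i y * (s i).indicator 1 y)
    (fun i => ((hf i).mul (measurable_one.indicator (hs i))))]
  refine Finset.prod_congr rfl fun i _ => ?_
  rw [withDensity_apply _ (hs i), ← lintegral_indicator (hs i) _]
  congr 1
  funext y
  rw [Set.indicator_apply, Set.indicator_apply]
  by_cases hy : y ∈ s i <;> simp [hy]

/-- scalar version of Lemma 1(b): conditionally on the past,
with observed increments `Z_{b,k} ~ N(δ_k J h, δ_k J)` and unobserved increments
`Z⁻_{b,k} ~ N((λ̄ − δ_k) J h, (λ̄ − δ_k) J)` (conditionally independent, with the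
allocation `δ_k` measurable in the past), the sums `Z̄_{b,k} = Z_{b,k} + Z⁻_{b,k}`
are conditionally `N(λ̄ J h, λ̄ J)` and the conditional change of measure via the
full potential score holds:
`E_h[g | past] = E_0[g · ∏_k exp(h Z̄_{b,k} − (λ̄/2) J h²) | past]`. -/
theorem batch_conditional_change_of_measure
    {α : Type*} [MeasurableSpace α]
    (K : ℕ) (J : ℝ) (hJ : 0 ≤ J) (h : ℝ) (lamBar : ℝ) (hlamBar : 0 < lamBar)
    (lam : α → Fin (K + 1) → ℝ) (hlam : Measurable lam)
    (hlam0 : ∀ a, lam a 0 = 0) (hlamMono : ∀ a, Monotone (lam a))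
    (hlamBarLe : ∀ a, lam a (Fin.last K) ≤ lamBar)
    (κ : ℝ → α → Measure ((Fin K → ℝ) × (Fin K → ℝ)))
    (hκ : ∀ h' a, κ h' a
      = (Measure.pi fun k : Fin K =>
          gaussianReal ((lam a k.succ - lam a k.castSucc) * J * h')
            (Real.toNNReal ((lam a k.succ - lam a k.castSucc) * J))).prod
        (Measure.pi fun k : Fin K =>
          gaussianReal ((lamBar - (lam a k.succ - lam a k.castSucc)) * J * h')
            (Real.toNNReal ((lamBar - (lam a k.succ - lam a k.castSucc)) * J)))) :
    ∀ a : α,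
      (Measure.map (fun p : (Fin K → ℝ) × (Fin K → ℝ) =>
          fun k => p.1 k + p.2 k) (κ h a)
        = Measure.pi fun _ : Fin K =>
            gaussianReal (lamBar * J * h) (Real.toNNReal (lamBar * J)))
      ∧ ∀ g : α × (Fin K → ℝ) → ℝ,
          Measurable g → (∃ C : ℝ, ∀ x, |g x| ≤ C) →
          ∫ p, g (a, p.1) ∂(κ h a)
            = ∫ p, g (a, p.1) * ∏ k : Fin K,
                Real.exp (h * (p.1 k + p.2 k) - lamBar / 2 * J * h ^ 2)
              ∂(κ 0 a) := by
  intro a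
  have hδJ : ∀ k : Fin K, 0 ≤ (lam a k.succ - lam a k.castSucc) * J := fun k =>
    mul_nonneg (sub_nonneg.mpr (hlamMono a (le_of_lt (Fin.castSucc_lt_succ (i := k))))) hJ
  have hδbar : ∀ k : Fin K, 0 ≤ (lamBar - (lam a k.succ - lam a k.castSucc)) * J := fun k => by
    refine mul_nonneg ?_ hJ
    have h1 : lam a k.succ ≤ lam a (Fin.last K) := hlamMono a (Fin.le_last _)
    have h2 : lam a 0 ≤ lam a k.castSucc := hlamMono a (Fin.zero_le _)
    have h3 := hlamBarLe a
    have h4 := hlam0 a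
    linarith
  constructor
  · rw [hκ h a]
    rw [← (measurePreserving_arrowProdEquivProdArrow ℝ ℝ (Fin K)
        (fun k => gaussianReal ((lam a k.succ - lam a k.castSucc) * J * h)
          (Real.toNNReal ((lam a k.succ - lam a k.castSucc) * J)))
        (fun k => gaussianReal ((lamBar - (lam a k.succ - lam a k.castSucc)) * J * h)
          (Real.toNNReal ((lamBar - (lam a k.succ - lam a k.castSucc)) * J)))).map_eq,
      Measure.map_map (by fun_prop) (MeasurableEquiv.measurable _)]
    have hcomp : ((fun p : (Fin K → ℝ) × (Fin K → ℝ) => fun k => p.1 k + p.2 k)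
        ∘ (MeasurableEquiv.arrowProdEquivProdArrow ℝ ℝ (Fin K)))
        = fun (f : Fin K → ℝ × ℝ) (k : Fin K) => (f k).1 + (f k).2 := rfl
    rw [hcomp]
    refine (measurePreserving_pi (f := fun _ : Fin K => fun q : ℝ × ℝ => q.1 + q.2) _ _ (fun k => ⟨by fun_prop, ?_⟩)).map_eq
    rw [gauss_conv]
    congr 1
    · ring
    · rw [← Real.toNNReal_add (hδJ k) (hδbar k)]
      congr 1
      ring
  · intro g hg hgb
    rw [hκ h a, hκ 0 a]
    simp only [mul_zero]
    -- tilting of the first (observed) pi factor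
    have tilt1 : ∀ k : Fin K,
        gaussianReal ((lam a k.succ - lam a k.castSucc) * J * h)
          (Real.toNNReal ((lam a k.succ - lam a k.castSucc) * J))
        = (gaussianReal 0 (Real.toNNReal ((lam a k.succ - lam a k.castSucc) * J))).withDensity
            (fun x => ENNReal.ofReal
              (Real.exp (h * x - (lam a k.succ - lam a k.castSucc) * J * h ^ 2 / 2))) :=
      fun k => gauss_tilt _ h (hδJ k)
    have tilt2 : ∀ k : Fin K,
        gaussianReal ((lamBar - (lam a k.succ - lam a k.castSucc)) * J * h)
          (Real.toNNReal ((lamBar - (lam a k.succ - lam a k.castSucc)) * J))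
        = (gaussianReal 0
            (Real.toNNReal ((lamBar - (lam a k.succ - lam a k.castSucc)) * J))).withDensity
            (fun x => ENNReal.ofReal
              (Real.exp (h * x - (lamBar - (lam a k.succ - lam a k.castSucc)) * J * h ^ 2 / 2))) :=
      fun k => gauss_tilt _ h (hδbar k)
    haveI sf1 : ∀ k : Fin K, SigmaFinite
        ((gaussianReal 0 (Real.toNNReal ((lam a k.succ - lam a k.castSucc) * J))).withDensity
          (fun x => ENNReal.ofReal
            (Real.exp (h * x - (lam a k.succ - lam a k.castSucc) * J * h ^ 2 / 2)))) :=
      fun k => by rw [← tilt1 k]; infer_instance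
    haveI sf2 : ∀ k : Fin K, SigmaFinite
        ((gaussianReal 0
            (Real.toNNReal ((lamBar - (lam a k.succ - lam a k.castSucc)) * J))).withDensity
          (fun x => ENNReal.ofReal
            (Real.exp (h * x - (lamBar - (lam a k.succ - lam a k.castSucc)) * J * h ^ 2 / 2)))) :=
      fun k => by rw [← tilt2 k]; infer_instance
    have hpi1 : Measure.pi (fun k : Fin K =>
          gaussianReal ((lam a k.succ - lam a k.castSucc) * J * h)
            (Real.toNNReal ((lam a k.succ - lam a k.castSucc) * J)))
        = (Measure.pi (fun k : Fin K =>
            gaussianReal 0 (Real.toNNReal ((lam a k.succ - lam a k.castSucc) * J)))).withDensity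
            (fun x => ((∏ k : Fin K, Real.toNNReal
              (Real.exp (h * x k - (lam a k.succ - lam a k.castSucc) * J * h ^ 2 / 2)) : ℝ≥0)
                : ℝ≥0∞)) := by
      rw [show (fun k : Fin K =>
          gaussianReal ((lam a k.succ - lam a k.castSucc) * J * h)
            (Real.toNNReal ((lam a k.succ - lam a k.castSucc) * J)))
          = fun k : Fin K =>
            (gaussianReal 0 (Real.toNNReal ((lam a k.succ - lam a k.castSucc) * J))).withDensity
              (fun x => ENNReal.ofReal
                (Real.exp (h * x - (lam a k.succ - lam a k.castSucc) * J * h ^ 2 / 2)))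
          from funext tilt1]
      rw [pi_withDensity _ _ (fun k => by fun_prop)]
      congr 1
      funext x
      rw [ENNReal.coe_finset_prod]
      exact Finset.prod_congr rfl fun k _ => rfl
    have hpi2 : Measure.pi (fun k : Fin K =>
          gaussianReal ((lamBar - (lam a k.succ - lam a k.castSucc)) * J * h)
            (Real.toNNReal ((lamBar - (lam a k.succ - lam a k.castSucc)) * J)))
        = (Measure.pi (fun k : Fin K =>
            gaussianReal 0
              (Real.toNNReal ((lamBar - (lam a k.succ - lam a k.castSucc)) * J)))).withDensity
            (fun y => ((∏ k : Fin K, Real.toNNReal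
              (Real.exp (h * y k - (lamBar - (lam a k.succ - lam a k.castSucc)) * J * h ^ 2 / 2))
                : ℝ≥0) : ℝ≥0∞)) := by
      rw [show (fun k : Fin K =>
          gaussianReal ((lamBar - (lam a k.succ - lam a k.castSucc)) * J * h)
            (Real.toNNReal ((lamBar - (lam a k.succ - lam a k.castSucc)) * J)))
          = fun k : Fin K =>
            (gaussianReal 0
              (Real.toNNReal ((lamBar - (lam a k.succ - lam a k.castSucc)) * J))).withDensity
              (fun x => ENNReal.ofReal
                (Real.exp (h * x - (lamBar - (lam a k.succ - lam a k.castSucc)) * J * h ^ 2 / 2)))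
          from funext tilt2]
      rw [pi_withDensity _ _ (fun k => by fun_prop)]
      congr 1
      funext y
      rw [ENNReal.coe_finset_prod]
      exact Finset.prod_congr rfl fun k _ => rfl
    -- measurability of the NNReal densities
    have hF1 : Measurable (fun x : Fin K → ℝ => (∏ k : Fin K, Real.toNNReal
        (Real.exp (h * x k - (lam a k.succ - lam a k.castSucc) * J * h ^ 2 / 2)) : ℝ≥0)) := by
      fun_prop
    have hF2 : Measurable (fun y : Fin K → ℝ => (∏ k : Fin K, Real.toNNReal
        (Real.exp (h * y k - (lamBar - (lam a k.succ - lam a k.castSucc)) * J * h ^ 2 / 2))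
          : ℝ≥0)) := by
      fun_prop
    -- LHS
    have L0 := integral_prod_mul
      (μ := Measure.pi (fun k : Fin K =>
          gaussianReal ((lam a k.succ - lam a k.castSucc) * J * h)
            (Real.toNNReal ((lam a k.succ - lam a k.castSucc) * J))))
      (ν := Measure.pi (fun k : Fin K =>
          gaussianReal ((lamBar - (lam a k.succ - lam a k.castSucc)) * J * h)
            (Real.toNNReal ((lamBar - (lam a k.succ - lam a k.castSucc)) * J))))
      (f := fun x => g (a, x)) (g := fun _ => (1 : ℝ))
    simp only [mul_one, integral_const, measure_univ, ENNReal.toReal_one, smul_eq_mul,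
      one_mul, probReal_univ] at L0
    rw [L0]
    have L1 : ∫ x, g (a, x) ∂(Measure.pi (fun k : Fin K =>
          gaussianReal ((lam a k.succ - lam a k.castSucc) * J * h)
            (Real.toNNReal ((lam a k.succ - lam a k.castSucc) * J))))
        = ∫ x, (∏ k : Fin K,
            Real.exp (h * x k - (lam a k.succ - lam a k.castSucc) * J * h ^ 2 / 2)) * g (a, x)
            ∂(Measure.pi (fun k : Fin K =>
              gaussianReal 0 (Real.toNNReal ((lam a k.succ - lam a k.castSucc) * J)))) := by
      rw [hpi1, integral_withDensity_eq_integral_smul hF1]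
      congr 1
      funext x
      rw [NNReal.smul_def, NNReal.coe_prod]
      congr 1
      exact Finset.prod_congr rfl fun k _ => Real.coe_toNNReal _ (Real.exp_nonneg _)
    rw [L1]
    -- RHS
    have R0 : ∀ p : (Fin K → ℝ) × (Fin K → ℝ),
        g (a, p.1) * ∏ k : Fin K, Real.exp (h * (p.1 k + p.2 k) - lamBar / 2 * J * h ^ 2)
        = (fun x => g (a, x) * ∏ k : Fin K,
            Real.exp (h * x k - (lam a k.succ - lam a k.castSucc) * J * h ^ 2 / 2)) p.1
          * (fun y => ∏ k : Fin K,
            Real.exp (h * y k - (lamBar - (lam a k.succ - lam a k.castSucc)) * J * h ^ 2 / 2)) p.2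
        := by
      intro p
      simp only []
      conv_rhs => rw [mul_assoc, ← Finset.prod_mul_distrib]
      congr 1
      refine Finset.prod_congr rfl fun k _ => ?_
      rw [← Real.exp_add]
      congr 1
      ring
    simp_rw [R0]
    have R1 := integral_prod_mul
      (μ := Measure.pi (fun k : Fin K =>
          gaussianReal 0 (Real.toNNReal ((lam a k.succ - lam a k.castSucc) * J))))
      (ν := Measure.pi (fun k : Fin K =>
          gaussianReal 0 (Real.toNNReal ((lamBar - (lam a k.succ - lam a k.castSucc)) * J))))
      (f := fun x => g (a, x) * ∏ k : Fin K,
          Real.exp (h * x k - (lam a k.succ - lam a k.castSucc) * J * h ^ 2 / 2))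
      (g := fun y => ∏ k : Fin K,
          Real.exp (h * y k - (lamBar - (lam a k.succ - lam a k.castSucc)) * J * h ^ 2 / 2))
    rw [R1]
    have R2 : ∫ y, ∏ k : Fin K,
          Real.exp (h * y k - (lamBar - (lam a k.succ - lam a k.castSucc)) * J * h ^ 2 / 2)
          ∂(Measure.pi (fun k : Fin K =>
            gaussianReal 0
              (Real.toNNReal ((lamBar - (lam a k.succ - lam a k.castSucc)) * J)))) = 1 := by
      have := integral_withDensity_eq_integral_smul (μ := Measure.pi (fun k : Fin K =>
          gaussianReal 0
            (Real.toNNReal ((lamBar - (lam a k.succ - lam a k.castSucc)) * J)))) hF2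
          (fun _ => (1 : ℝ))
      rw [← hpi2] at this
      simp only [smul_eq_mul, mul_one, integral_const, measure_univ, ENNReal.toReal_one, probReal_univ,
        one_smul, NNReal.smul_def, NNReal.coe_prod] at this
      conv_rhs => rw [this]
      refine integral_congr_ae (Filter.Eventually.of_forall fun y => ?_)
      exact Finset.prod_congr rfl fun k _ => (Real.coe_toNNReal _ (Real.exp_nonneg _)).symm
    rw [R2, mul_one]
    refine integral_congr_ae (Filter.Eventually.of_forall fun x => ?_)
    exact mul_comm _ _
end
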